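/- arXiv:math/0512563 — 2 statements merged into one kernel-verified Lean document; each statement's English description precedes it below -/
import Mathlib

section
/- Let Δ : D_q → D_q ⊗_k D_q be any k-algebra homomorphism satisfying Δ(E) = E⊗1 + K⊗E, Δ(F) = F⊗K̃⁻¹ + 1⊗F, Δ(K^{±1}) = K^{±1}⊗K^{±1} and Δ(K̃^{±1}) = K̃^{±1}⊗K̃^{±1}. Then for every t ∈ ℕ, Δ([K,K̃;t]) = Σ_{a=0}^{t} [K,K̃;t−a]·K̃^{−a} ⊗ K^{t−a}·[K,K̃;a]. -/
noncomputable section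

/-- Generators of the quantum double `D_q`. -/
inductive DGen : Type
  | E | F | K | Kinv | Kt | Ktinv
  deriving DecidableEq

/-- The defining relations of `D_q`. -/
inductive DRel (k : Type) [Field k] (q : k) :
    FreeAlgebra k DGen → FreeAlgebra k DGen → Prop
  | KE : DRel k q (FreeAlgebra.ι k DGen.K * FreeAlgebra.ι k DGen.E)
      ((q ^ 2) • (FreeAlgebra.ι k DGen.E * FreeAlgebra.ι k DGen.K))
  | KF : DRel k q (FreeAlgebra.ι k DGen.K * FreeAlgebra.ι k DGen.F)
      (((q ^ 2)⁻¹) • (FreeAlgebra.ι k DGen.F * FreeAlgebra.ι k DGen.K))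
  | KtE : DRel k q (FreeAlgebra.ι k DGen.Kt * FreeAlgebra.ι k DGen.E)
      ((q ^ 2) • (FreeAlgebra.ι k DGen.E * FreeAlgebra.ι k DGen.Kt))
  | KtF : DRel k q (FreeAlgebra.ι k DGen.Kt * FreeAlgebra.ι k DGen.F)
      (((q ^ 2)⁻¹) • (FreeAlgebra.ι k DGen.F * FreeAlgebra.ι k DGen.Kt))
  | KKinv : DRel k q (FreeAlgebra.ι k DGen.K * FreeAlgebra.ι k DGen.Kinv) 1
  | KinvK : DRel k q (FreeAlgebra.ι k DGen.Kinv * FreeAlgebra.ι k DGen.K) 1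
  | KtKtinv : DRel k q (FreeAlgebra.ι k DGen.Kt * FreeAlgebra.ι k DGen.Ktinv) 1
  | KtinvKt : DRel k q (FreeAlgebra.ι k DGen.Ktinv * FreeAlgebra.ι k DGen.Kt) 1
  | KKt : DRel k q (FreeAlgebra.ι k DGen.K * FreeAlgebra.ι k DGen.Kt)
      (FreeAlgebra.ι k DGen.Kt * FreeAlgebra.ι k DGen.K)
  | EF : DRel k q (FreeAlgebra.ι k DGen.E * FreeAlgebra.ι k DGen.F)
      (FreeAlgebra.ι k DGen.F * FreeAlgebra.ι k DGen.E +
        ((q - q⁻¹)⁻¹) • (FreeAlgebra.ι k DGen.K - FreeAlgebra.ι k DGen.Ktinv))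

/-- The quantum double `D_q` of `U_q(sl2)^{≤0}`, presented by generators and relations. -/
abbrev Dq (k : Type) [Field k] (q : k) := RingQuot (DRel k q)

def DE (k : Type) [Field k] (q : k) : Dq k q :=
  RingQuot.mkAlgHom k (DRel k q) (FreeAlgebra.ι k DGen.E)
def DF (k : Type) [Field k] (q : k) : Dq k q :=
  RingQuot.mkAlgHom k (DRel k q) (FreeAlgebra.ι k DGen.F)
def DK (k : Type) [Field k] (q : k) : Dq k q :=
  RingQuot.mkAlgHom k (DRel k q) (FreeAlgebra.ι k DGen.K)
def DKinv (k : Type) [Field k] (q : k) : Dq k q :=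
  RingQuot.mkAlgHom k (DRel k q) (FreeAlgebra.ι k DGen.Kinv)
def DKt (k : Type) [Field k] (q : k) : Dq k q :=
  RingQuot.mkAlgHom k (DRel k q) (FreeAlgebra.ι k DGen.Kt)
def DKtinv (k : Type) [Field k] (q : k) : Dq k q :=
  RingQuot.mkAlgHom k (DRel k q) (FreeAlgebra.ι k DGen.Ktinv)

/-- The quantum integer `[n]_q = (qⁿ - q⁻ⁿ)/(q - q⁻¹)`. -/
def qint (k : Type) [Field k] (q : k) (n : ℕ) : k := (q ^ n - q⁻¹ ^ n) / (q - q⁻¹)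

/-- The quantum factorial `[n]_q!`. -/
def qfact (k : Type) [Field k] (q : k) : ℕ → k
  | 0 => 1
  | n + 1 => qfact k q n * qint k q (n + 1)

/-- The Gaussian binomial coefficient `[m choose n]_q`. -/
def qbinom (k : Type) [Field k] (q : k) (m n : ℕ) : k :=
  qfact k q m / (qfact k q n * qfact k q (m - n))

/-- The element `[K,K̃;c;t] = ∏_{s=1}^t (K q^{c-s+1} - K̃⁻¹ q^{-c+s-1})/(q^s - q^{-s})` of `D_q`. -/
def KKtc (k : Type) [Field k] (q : k) (c : ℤ) : ℕ → Dq k q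
  | 0 => 1
  | t + 1 =>
      KKtc k q c t *
        ((q ^ ((t : ℤ) + 1) - q ^ (-((t : ℤ) + 1)))⁻¹ •
          (q ^ (c - (t : ℤ)) • DK k q - q ^ ((t : ℤ) - c) • DKtinv k q))

open scoped TensorProduct

/-!
Since `Δ` is an algebra map, `Δ [K,K̃;t]` is the same product with `K, K̃⁻¹` replaced by
`K ⊗ K, K̃⁻¹ ⊗ K̃⁻¹`, so the claim is an identity for the brackets of two commuting pairs
`(x₁, y₁)`, `(x₂, y₂)` and the pair `(x₁ ⊗ x₂, y₁ ⊗ y₂)`. It is proved by induction on `t`: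
multiplying the term of index `(s, a)` by the next factor `q^{-t} x₁ ⊗ x₂ - q^t y₁ ⊗ y₂`
splits it into the terms of index `(s + 1, a)` and `(s, a + 1)`, and collecting terms uses
`q^{-a} (q^s - q^{-s}) + q^s (q^a - q^{-a}) = q^{s+a} - q^{-(s+a)}`.
-/

open Finset Finset.Nat TensorProduct

section QBracket

variable {k A B : Type*} [Field k] [Ring A] [Algebra k A] [Ring B] [Algebra k B]

def qDiff (q : k) (n : ℕ) : k := q ^ (n : ℤ) - q ^ (-(n : ℤ))

@[simp]
lemma qDiff_zero (q : k) : qDiff q 0 = 0 := by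
  simp [qDiff]

lemma zpow_neg_mul_qDiff_add_zpow_mul_qDiff {q : k} (hq : q ≠ 0) (s a : ℕ) :
    q ^ (-(a : ℤ)) * qDiff q s + q ^ (s : ℤ) * qDiff q a = qDiff q (s + a) := by
  simp only [qDiff, mul_sub, ← zpow_add₀ hq]
  push_cast
  ring_nf

lemma qDiff_succ_ne_zero {q : k} (hq0 : q ≠ 0) (hq : ∀ n : ℕ, 0 < n → q ^ n ≠ 1) (n : ℕ) :
    qDiff q (n + 1) ≠ 0 := by
  intro h
  have h' : q ^ (n + 1) = (q ^ (n + 1))⁻¹ := by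
    simpa only [zpow_neg, zpow_natCast] using sub_eq_zero.mp h
  refine hq (2 * (n + 1)) (by omega) ?_
  calc q ^ (2 * (n + 1)) = q ^ (n + 1) * q ^ (n + 1) := by ring
    _ = 1 := by nth_rw 2 [h']; exact mul_inv_cancel₀ (pow_ne_zero _ hq0)

variable (q : k)

def qBracket (x y : A) : ℕ → A
  | 0 => 1
  | t + 1 => qBracket x y t * ((qDiff q (t + 1))⁻¹ • (q ^ (-(t : ℤ)) • x - q ^ (t : ℤ) • y))

def comulTerm (x₁ y₁ : A) (x₂ y₂ : B) (s a : ℕ) : A ⊗[k] B :=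
  (qBracket q x₁ y₁ s * y₁ ^ a) ⊗ₜ (x₂ ^ s * qBracket q x₂ y₂ a)

variable {q}

lemma qDiff_smul_qBracket_succ (x y : A) {t : ℕ} (ht : qDiff q (t + 1) ≠ 0) :
    qDiff q (t + 1) • qBracket q x y (t + 1) =
      q ^ (-(t : ℤ)) • (qBracket q x y t * x) - q ^ (t : ℤ) • (qBracket q x y t * y) := by
  rw [qBracket, mul_smul_comm, smul_smul, mul_inv_cancel₀ ht, one_smul, mul_sub,
    mul_smul_comm, mul_smul_comm]

lemma map_qBracket (f : A →ₐ[k] B) (x y : A) (t : ℕ) :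
    f (qBracket q x y t) = qBracket q (f x) (f y) t := by
  induction t with
  | zero => exact map_one f
  | succ t ih => simp only [qBracket, map_mul, map_smul, map_sub, ih]

lemma Commute.qBracket_right {x y : A} (h : Commute x y) (t : ℕ) :
    Commute x (qBracket q x y t) := by
  induction t with
  | zero => exact Commute.one_right x
  | succ t ih =>
    exact ih.mul_right ((((Commute.refl x).smul_right _).sub_right (h.smul_right _)).smul_right _)

lemma comulTerm_mul {x₁ y₁ : A} {x₂ y₂ : B} (h₁ : Commute x₁ y₁) (h₂ : Commute x₂ y₂)
    {s a : ℕ} (hs : qDiff q (s + 1) ≠ 0) (ha : qDiff q (a + 1) ≠ 0) :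
    comulTerm q x₁ y₁ x₂ y₂ s a *
        (q ^ (-((s + a : ℕ) : ℤ)) • (x₁ ⊗ₜ x₂) - q ^ ((s + a : ℕ) : ℤ) • (y₁ ⊗ₜ y₂)) =
      (q ^ (-(a : ℤ)) * qDiff q (s + 1)) • comulTerm q x₁ y₁ x₂ y₂ (s + 1) a +
        (q ^ (s : ℤ) * qDiff q (a + 1)) • comulTerm q x₁ y₁ x₂ y₂ s (a + 1) := by
  have hleft : qDiff q (s + 1) • comulTerm q x₁ y₁ x₂ y₂ (s + 1) a =
      ((q ^ (-(s : ℤ)) • (qBracket q x₁ y₁ s * x₁) - q ^ (s : ℤ) • (qBracket q x₁ y₁ s * y₁)) *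
        y₁ ^ a) ⊗ₜ (x₂ ^ (s + 1) * qBracket q x₂ y₂ a) := by
    rw [comulTerm, smul_tmul', ← smul_mul_assoc, qDiff_smul_qBracket_succ x₁ y₁ hs]
  have hright : qDiff q (a + 1) • comulTerm q x₁ y₁ x₂ y₂ s (a + 1) =
      (qBracket q x₁ y₁ s * y₁ ^ (a + 1)) ⊗ₜ (x₂ ^ s *
        (q ^ (-(a : ℤ)) • (qBracket q x₂ y₂ a * x₂) - q ^ (a : ℤ) • (qBracket q x₂ y₂ a * y₂))) := by
    rw [comulTerm, ← tmul_smul, ← mul_smul_comm, qDiff_smul_qBracket_succ x₂ y₂ ha]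
  have hyx : y₁ ^ a * x₁ = x₁ * y₁ ^ a := ((h₁.pow_right a).eq).symm
  have hBx : qBracket q x₂ y₂ a * x₂ = x₂ * qBracket q x₂ y₂ a := ((h₂.qBracket_right a).eq).symm
  have hneg : q ^ (-((s + a : ℕ) : ℤ)) = q ^ (-(s : ℤ)) * q ^ (-(a : ℤ)) := by
    simp only [zpow_neg, zpow_natCast, pow_add, mul_inv]
  have hpos : q ^ ((s + a : ℕ) : ℤ) = q ^ (s : ℤ) * q ^ (a : ℤ) := by
    simp only [zpow_natCast, pow_add]
  rw [mul_smul, mul_smul, hleft, hright, hneg, hpos]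
  simp only [comulTerm, mul_sub, sub_mul, tmul_sub, sub_tmul, smul_sub, smul_mul_assoc,
    mul_smul_comm, ← smul_tmul', tmul_smul, Algebra.TensorProduct.tmul_mul_tmul, mul_assoc,
    pow_succ, smul_smul]
  rw [hyx, hBx, (Commute.self_pow y₁ a).eq]
  module

theorem qBracket_tmul {x₁ y₁ : A} {x₂ y₂ : B} (h₁ : Commute x₁ y₁) (h₂ : Commute x₂ y₂)
    (hq : ∀ n, qDiff q (n + 1) ≠ 0) (t : ℕ) :
    qBracket q (x₁ ⊗ₜ x₂) (y₁ ⊗ₜ y₂) t =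
      ∑ p ∈ antidiagonal t, comulTerm q x₁ y₁ x₂ y₂ p.1 p.2 := by
  have hq0 : q ≠ 0 := by
    -- `qDiff 0 1 = 0 - 0⁻¹` vanishes since `0⁻¹ = 0`
    rintro rfl
    simpa [qDiff] using hq 0
  induction t with
  | zero => simp [qBracket, comulTerm, Algebra.TensorProduct.one_def]
  | succ t ih =>
    set T := comulTerm q x₁ y₁ x₂ y₂
    have hsum : ∑ p ∈ antidiagonal t,
          T p.1 p.2 * (q ^ (-(t : ℤ)) • (x₁ ⊗ₜ x₂) - q ^ (t : ℤ) • (y₁ ⊗ₜ y₂)) =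
        ∑ p ∈ antidiagonal (t + 1), qDiff q (t + 1) • T p.1 p.2 :=
      calc _ = ∑ p ∈ antidiagonal t, ((q ^ (-(p.2 : ℤ)) * qDiff q (p.1 + 1)) • T (p.1 + 1) p.2 +
              (q ^ (p.1 : ℤ) * qDiff q (p.2 + 1)) • T p.1 (p.2 + 1)) := by
            refine Finset.sum_congr rfl fun ⟨s, a⟩ hp => ?_
            obtain rfl : s + a = t := mem_antidiagonal.mp hp
            exact comulTerm_mul h₁ h₂ (hq s) (hq a)
        _ = ∑ p ∈ antidiagonal (t + 1), (q ^ (-(p.2 : ℤ)) * qDiff q p.1) • T p.1 p.2 +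
              ∑ p ∈ antidiagonal (t + 1), (q ^ (p.1 : ℤ) * qDiff q p.2) • T p.1 p.2 := by
            rw [Finset.sum_add_distrib, sum_antidiagonal_succ, sum_antidiagonal_succ']
            simp
        _ = _ := by
            rw [← Finset.sum_add_distrib]
            refine Finset.sum_congr rfl fun ⟨s, a⟩ hp => ?_
            rw [← add_smul, zpow_neg_mul_qDiff_add_zpow_mul_qDiff hq0, mem_antidiagonal.mp hp]
    rw [qBracket, ih, mul_smul_comm, Finset.sum_mul, hsum, Finset.smul_sum]
    simp only [smul_smul, inv_mul_cancel₀ (hq t), one_smul]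

end QBracket

section Dq

variable (k : Type) [Field k] (q : k)

lemma DK_commute_DKtinv : Commute (DK k q) (DKtinv k q) := by
  let Kt : (Dq k q)ˣ :=
    { val := DKt k q
      inv := DKtinv k q
      val_inv := by
        rw [DKt, DKtinv, ← map_mul, RingQuot.mkAlgHom_rel k DRel.KtKtinv, map_one]
      inv_val := by
        rw [DKt, DKtinv, ← map_mul, RingQuot.mkAlgHom_rel k DRel.KtinvKt, map_one] }
  have hKKt : Commute (DK k q) Kt := by
    change DK k q * DKt k q = DKt k q * DK k q
    rw [DK, DKt, ← map_mul, ← map_mul]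
    exact RingQuot.mkAlgHom_rel k DRel.KKt
  exact hKKt.units_inv_right

lemma KKtc_zero_eq_qBracket (t : ℕ) : KKtc k q 0 t = qBracket q (DK k q) (DKtinv k q) t := by
  induction t with
  | zero => rfl
  | succ t ih =>
    rw [KKtc, qBracket, ih, qDiff]
    push_cast
    simp only [zero_sub, sub_zero]

end Dq

theorem comul_KKtc_general (k : Type) [Field k] (q : k)
    (hq0 : q ≠ 0) (hq : ∀ n : ℕ, 0 < n → q ^ n ≠ 1)
    (Δ : Dq k q →ₐ[k] (Dq k q ⊗[k] Dq k q))
    (hK : Δ (DK k q) = DK k q ⊗ₜ[k] DK k q)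
    (hKtinv : Δ (DKtinv k q) = DKtinv k q ⊗ₜ[k] DKtinv k q)
    (t : ℕ) :
    Δ (KKtc k q 0 t) =
      ∑ a ∈ Finset.range (t + 1),
        (KKtc k q 0 (t - a) * DKtinv k q ^ a) ⊗ₜ[k]
          (DK k q ^ (t - a) * KKtc k q 0 a) := by
  have hKKt := DK_commute_DKtinv k q
  simp only [KKtc_zero_eq_qBracket]
  -- naming `B` lets its `Ring` instance unify with the semiring structure in the type of `Δ`
  rw [map_qBracket (B := Dq k q ⊗[k] Dq k q) Δ, hK, hKtinv,
    qBracket_tmul hKKt hKKt (qDiff_succ_ne_zero hq0 hq), ← sum_antidiagonal_swap]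
  exact sum_antidiagonal_eq_sum_range_succ (fun a s => comulTerm q _ _ _ _ s a) t

/-- if `Δ : D_q → D_q ⊗ D_q` is an algebra map with the comultiplication
values on the generators, then
`Δ([K,K̃;t]) = Σ_{a=0}^{t} ([K,K̃;t−a]·K̃^{−a}) ⊗ (K^{t−a}·[K,K̃;a])`. -/
theorem comul_KKtc (k : Type) [Field k] (q : k)
    (hq0 : q ≠ 0) (hq : ∀ n : ℕ, 0 < n → q ^ n ≠ 1)
    (Δ : Dq k q →ₐ[k] (Dq k q ⊗[k] Dq k q))
    (hE : Δ (DE k q) = DE k q ⊗ₜ[k] 1 + DK k q ⊗ₜ[k] DE k q)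
    (hF : Δ (DF k q) = DF k q ⊗ₜ[k] DKtinv k q + 1 ⊗ₜ[k] DF k q)
    (hK : Δ (DK k q) = DK k q ⊗ₜ[k] DK k q)
    (hKinv : Δ (DKinv k q) = DKinv k q ⊗ₜ[k] DKinv k q)
    (hKt : Δ (DKt k q) = DKt k q ⊗ₜ[k] DKt k q)
    (hKtinv : Δ (DKtinv k q) = DKtinv k q ⊗ₜ[k] DKtinv k q)
    (t : ℕ) :
    Δ (KKtc k q 0 t) =
      ∑ a ∈ Finset.range (t + 1),
        (KKtc k q 0 (t - a) * DKtinv k q ^ a) ⊗ₜ[k]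
          (DK k q ^ (t - a) * KKtc k q 0 a) :=
  comul_KKtc_general k q hq0 hq Δ hK hKtinv t
end
end

section
/- Assume q is not a root of unity. If λ² ≠ q^{2n} for every integer n ≥ 0 (equivalently, λ ≠ qⁿ and λ ≠ −qⁿ for all n ≥ 0), then M_w(λ) is a simple D_q-module: its only D_q-submodules are 0 and M_w(λ). -/
noncomputable section

/-- Action of `K` on the Verma module `M_w(λ)`: `K·m_i = wλq^{−2i}·m_i`. -/
def vK (k : Type) [Field k] (q w lam : k) : (ℕ →₀ k) →ₗ[k] (ℕ →₀ k) :=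
  Finsupp.lift (ℕ →₀ k) k ℕ fun i =>
    (w * lam * q ^ (-(2 * (i : ℤ)))) • Finsupp.single i 1

/-- Action of `K⁻¹` on `M_w(λ)` (the inverse operator of `vK`). -/
def vKinv (k : Type) [Field k] (q w lam : k) : (ℕ →₀ k) →ₗ[k] (ℕ →₀ k) :=
  Finsupp.lift (ℕ →₀ k) k ℕ fun i =>
    ((w * lam * q ^ (-(2 * (i : ℤ))))⁻¹) • Finsupp.single i 1

/-- Action of `K̃` on `M_w(λ)`: `K̃·m_i = w⁻¹λq^{−2i}·m_i`. -/
def vKt (k : Type) [Field k] (q w lam : k) : (ℕ →₀ k) →ₗ[k] (ℕ →₀ k) :=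
  Finsupp.lift (ℕ →₀ k) k ℕ fun i =>
    (w⁻¹ * lam * q ^ (-(2 * (i : ℤ)))) • Finsupp.single i 1

/-- Action of `K̃⁻¹` on `M_w(λ)` (the inverse operator of `vKt`). -/
def vKtinv (k : Type) [Field k] (q w lam : k) : (ℕ →₀ k) →ₗ[k] (ℕ →₀ k) :=
  Finsupp.lift (ℕ →₀ k) k ℕ fun i =>
    ((w⁻¹ * lam * q ^ (-(2 * (i : ℤ))))⁻¹) • Finsupp.single i 1

/-- Action of `F` on `M_w(λ)`: `F·m_i = m_{i+1}`. -/
def vF (k : Type) [Field k] : (ℕ →₀ k) →ₗ[k] (ℕ →₀ k) :=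
  Finsupp.lift (ℕ →₀ k) k ℕ fun i => Finsupp.single (i + 1) 1

/-- Action of `E` on `M_w(λ)`: `E·m_0 = 0` and
`E·m_i = [i]_q·w·(λq^{1−i} − λ⁻¹q^{i−1})/(q − q⁻¹)·m_{i−1}` for `i ≥ 1`. -/
def vE (k : Type) [Field k] (q w lam : k) : (ℕ →₀ k) →ₗ[k] (ℕ →₀ k) :=
  Finsupp.lift (ℕ →₀ k) k ℕ fun i =>
    if i = 0 then 0
    else
      (qint k q i * w * (lam * q ^ (1 - (i : ℤ)) - lam⁻¹ * q ^ ((i : ℤ) - 1)) / (q - q⁻¹)) •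
        Finsupp.single (i - 1) 1

/-- `ρ` realizes the Verma module `M_w(λ)` on `ℕ →₀ k`. -/
def VermaCond (k : Type) [Field k] (q w lam : k)
    (ρ : Dq k q →ₐ[k] Module.End k (ℕ →₀ k)) : Prop :=
  ρ (DE k q) = vE k q w lam ∧ ρ (DF k q) = vF k ∧
  ρ (DK k q) = vK k q w lam ∧ ρ (DKinv k q) = vKinv k q w lam ∧
  ρ (DKt k q) = vKt k q w lam ∧ ρ (DKtinv k q) = vKtinv k q w lam

/-! `E` lowers `m_{i+1}` to a nonzero multiple of `m_i`: its coefficient is `[i+1]_q` times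
`w (λq^{-i} - λ⁻¹q^i)/(q - q⁻¹)`, which vanishes only if `q` is a root of unity or `λ² = q^{2i}`.
So from any nonzero vector of an invariant subspace, repeated application of `E` kills every
coefficient but the lowest one and produces `m_0`; the vectors `Fⁱ m_0 = m_i` then span the module. -/

section Shift

variable {k : Type*} [Field k]

theorem Finsupp.single_zero_mem_of_lowering_stable {W : Submodule k (ℕ →₀ k)}
    {E : (ℕ →₀ k) →ₗ[k] (ℕ →₀ k)} {c : ℕ → k} (hc : ∀ j, c j ≠ 0)
    (hE : ∀ v j, E v j = c j * v (j + 1)) (hEW : ∀ v ∈ W, E v ∈ W) (n : ℕ) :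
    ∀ v ∈ W, v ≠ 0 → (∀ j, n < j → v j = 0) → Finsupp.single 0 1 ∈ W := by
  induction n with
  | zero =>
    intro v hv hv0 hsupp
    have hv_eq : v = Finsupp.single 0 (v 0) := by
      ext j
      rcases Nat.eq_zero_or_pos j with rfl | hj
      · simp
      · simp [hsupp j hj, hj.ne']
    have hv00 : v 0 ≠ 0 := fun h => hv0 (by rw [hv_eq, h, Finsupp.single_zero])
    have := W.smul_mem (v 0)⁻¹ hv
    rwa [hv_eq, Finsupp.smul_single, smul_eq_mul, Finsupp.single_eq_same,
      inv_mul_cancel₀ hv00] at this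
  | succ n ih =>
    intro v hv hv0 hsupp
    by_cases htop : v (n + 1) = 0
    · refine ih v hv hv0 fun j hj => ?_
      rcases (Nat.succ_le_of_lt hj).eq_or_lt with rfl | hj'
      · exact htop
      · exact hsupp j hj'
    · refine ih (E v) (hEW v hv) (fun h => ?_) fun j hj => ?_
      · have := DFunLike.congr_fun h n
        rw [hE, Finsupp.coe_zero, Pi.zero_apply] at this
        exact htop ((mul_eq_zero.mp this).resolve_left (hc n))
      · rw [hE, hsupp (j + 1) (by omega), mul_zero]

theorem Finsupp.eq_top_of_single_zero_mem_of_raising_stable {W : Submodule k (ℕ →₀ k)}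
    {F : (ℕ →₀ k) →ₗ[k] (ℕ →₀ k)} (hF : ∀ i, F (Finsupp.single i 1) = Finsupp.single (i + 1) 1)
    (hFW : ∀ v ∈ W, F v ∈ W) (h0 : Finsupp.single 0 1 ∈ W) : W = ⊤ := by
  have hsingle : ∀ i, Finsupp.single i (1 : k) ∈ W := by
    intro i
    induction i with
    | zero => exact h0
    | succ i ih => simpa only [hF] using hFW _ ih
  rw [eq_top_iff, ← (Finsupp.basisSingleOne : Module.Basis ℕ k (ℕ →₀ k)).span_eq,
    Submodule.span_le, Finsupp.coe_basisSingleOne]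
  rintro _ ⟨i, rfl⟩
  exact hsingle i

theorem Finsupp.eq_bot_or_eq_top_of_shift_stable {W : Submodule k (ℕ →₀ k)}
    {E F : (ℕ →₀ k) →ₗ[k] (ℕ →₀ k)} {c : ℕ → k} (hc : ∀ j, c j ≠ 0)
    (hE : ∀ v j, E v j = c j * v (j + 1))
    (hF : ∀ i, F (Finsupp.single i 1) = Finsupp.single (i + 1) 1)
    (hEW : ∀ v ∈ W, E v ∈ W) (hFW : ∀ v ∈ W, F v ∈ W) : W = ⊥ ∨ W = ⊤ := by
  refine or_iff_not_imp_left.2 fun hW => ?_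
  obtain ⟨v, hv, hv0⟩ := Submodule.exists_mem_ne_zero_of_ne_bot hW
  refine eq_top_of_single_zero_mem_of_raising_stable hF hFW
    (single_zero_mem_of_lowering_stable hc hE hEW (v.support.sup id) v hv hv0 fun j hj => ?_)
  by_contra h
  exact hj.not_ge (Finset.le_sup (f := id) (Finsupp.mem_support_iff.2 h))

end Shift

section Verma

variable {k : Type} [Field k] {q : k}

theorem sub_inv_ne_zero_of_sq_ne_one (hq0 : q ≠ 0) (hq2 : q ^ 2 ≠ 1) : q - q⁻¹ ≠ 0 := by
  rw [sub_ne_zero]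
  intro h
  apply hq2
  rw [sq]
  nth_rewrite 2 [h]
  exact mul_inv_cancel₀ hq0

theorem qint_ne_zero (hq0 : q ≠ 0) (hq : ∀ n : ℕ, 0 < n → q ^ n ≠ 1) {n : ℕ} (hn : 0 < n) :
    qint k q n ≠ 0 := by
  refine div_ne_zero (sub_ne_zero.2 fun h => hq (2 * n) (by omega) ?_)
    (sub_inv_ne_zero_of_sq_ne_one hq0 (hq 2 two_pos))
  rw [two_mul, pow_add]
  nth_rewrite 2 [h]
  rw [← mul_pow, mul_inv_cancel₀ hq0, one_pow]

theorem mul_zpow_neg_sub_inv_mul_zpow_ne_zero (hq0 : q ≠ 0) {lam : k} (hlam : lam ≠ 0) {i : ℕ}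
    (hi : lam ^ 2 ≠ q ^ (2 * i)) : lam * q ^ (-(i : ℤ)) - lam⁻¹ * q ^ (i : ℤ) ≠ 0 := by
  rw [sub_ne_zero, zpow_neg, zpow_natCast]
  intro h
  have hqi : q ^ i ≠ 0 := pow_ne_zero _ hq0
  field_simp at h
  exact hi (by rw [h, pow_mul'])

def vermaECoeff (k : Type) [Field k] (q w lam : k) (i : ℕ) : k :=
  qint k q i * w * (lam * q ^ (1 - (i : ℤ)) - lam⁻¹ * q ^ ((i : ℤ) - 1)) / (q - q⁻¹)

theorem vE_apply (w lam : k) (v : ℕ →₀ k) (j : ℕ) :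
    vE k q w lam v j = vermaECoeff k q w lam (j + 1) * v (j + 1) := by
  induction v using Finsupp.induction_linear with
  | zero => simp
  | add f g hf hg => simp only [map_add, Finsupp.add_apply, hf, hg, mul_add]
  | single a b =>
    simp only [vE, vermaECoeff, Finsupp.lift_apply, Finsupp.sum_single_index, zero_smul]
    rcases a with _ | m
    · simp
    · rcases eq_or_ne m j with rfl | h
      · simp [mul_comm]
      · simp [Ne.symm h]

theorem vF_single (i : ℕ) : vF k (Finsupp.single i 1) = Finsupp.single (i + 1) 1 := by
  simp [vF]

theorem vermaECoeff_succ_ne_zero {w lam : k} (hq0 : q ≠ 0) (hq : ∀ n : ℕ, 0 < n → q ^ n ≠ 1)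
    (hw : w ≠ 0) (hlam : lam ≠ 0) {i : ℕ} (hi : lam ^ 2 ≠ q ^ (2 * i)) :
    vermaECoeff k q w lam (i + 1) ≠ 0 := by
  have hexp : (1 : ℤ) - ((i + 1 : ℕ) : ℤ) = -(i : ℤ) ∧ ((i + 1 : ℕ) : ℤ) - 1 = i := by
    constructor <;> push_cast <;> ring
  rw [vermaECoeff, hexp.1, hexp.2]
  exact div_ne_zero
    (mul_ne_zero (mul_ne_zero (qint_ne_zero hq0 hq i.succ_pos) hw)
      (mul_zpow_neg_sub_inv_mul_zpow_ne_zero hq0 hlam hi))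
    (sub_inv_ne_zero_of_sq_ne_one hq0 (hq 2 two_pos))

end Verma

/-- if `q` is not a root of unity and `λ² ≠ q^{2n}` for all `n ≥ 0`,
then the Verma module `M_w(λ)` is a simple `D_q`-module: its only invariant
subspaces are `0` and the whole space. -/
theorem verma_simple (k : Type) [Field k] (q w lam : k)
    (hq0 : q ≠ 0) (hq : ∀ n : ℕ, 0 < n → q ^ n ≠ 1) (hw : w ≠ 0) (hlam : lam ≠ 0)
    (hgen : ∀ n : ℕ, lam ^ 2 ≠ q ^ (2 * n))
    (ρ : Dq k q →ₐ[k] Module.End k (ℕ →₀ k)) (hρ : VermaCond k q w lam ρ)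
    (W : Submodule k (ℕ →₀ k)) (hW : ∀ (x : Dq k q), ∀ v ∈ W, ρ x v ∈ W) :
    W = ⊥ ∨ W = ⊤ := by
  obtain ⟨hE, hF, -⟩ := hρ
  exact Finsupp.eq_bot_or_eq_top_of_shift_stable
    (fun i => vermaECoeff_succ_ne_zero hq0 hq hw hlam (hgen i)) (vE_apply w lam) vF_single
    (fun v hv => hE ▸ hW (DE k q) v hv) (fun v hv => hF ▸ hW (DF k q) v hv)
end
end
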